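/- Let τ < T be real numbers and C > 0. Then there exists C₁ > 0, depending only on τ, T and C, with the following property: for every n ≥ 1, every choice of knots τ = t_0 < t_1 < … < t_n = T and values x_0, …, x_n ∈ ℝ satisfying (max_i |x_i|) · (min_i (t_{i+1} − t_i))^{-3} < C, any natural cubic spline X through this data satisfies sup_{[τ,T]} |X| + sup_{[τ,T]} |X'| + sup_{[τ,T]} |X''| < C₁. -/

import Mathlib

/-!
Write `M i = X''(t i)`, `h i = t (i + 1) - t i` and `d i = (x (i + 1) - x i) / h i`. On each
piece `X` is a cubic, so `x (i + 1) - x i` is determined by `X'` and `X''` at either end; equating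
the two expressions for `X'(t (i + 1))` gives the three-moment equations
`h i M i + 2 (h i + h (i + 1)) M (i + 1) + h (i + 1) M (i + 2) = 6 (d (i + 1) - d i)`,
with `M 0 = M n = 0` by naturality. The system is diagonally dominant, so a maximiser of `|M i|`
yields `|M i| ≤ 12 max |x i| / h_min²`. As `X''` is affine between knots this bounds `X''`; the
mean value theorem then bounds `X'` (starting from `X'(t 0)`, read off the first piece) and
`X` (starting from `X(t 0) = x 0`). Finally `max |x i| < C h_min³` and `h_min ≤ T - τ` turn
each bound into a multiple of a power of `T - τ`.
-/

open Set Finset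

/-- `X` is a natural cubic spline through the data `(t_i, x_i)_{i ≤ n}`. -/
def IsNaturalCubicSpline (n : ℕ) (t x : ℕ → ℝ) (X : ℝ → ℝ) : Prop :=
  ContDiffOn ℝ 2 X (Set.Icc (t 0) (t n)) ∧
  (∀ i < n, ∃ p : Polynomial ℝ, p.degree ≤ 3 ∧
    ∀ s ∈ Set.Icc (t i) (t (i + 1)), X s = p.eval s) ∧
  (∀ i ≤ n, X (t i) = x i) ∧
  iteratedDerivWithin 2 X (Set.Icc (t 0) (t n)) (t 0) = 0 ∧
  iteratedDerivWithin 2 X (Set.Icc (t 0) (t n)) (t n) = 0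

open Polynomial in
theorem Polynomial.eval_sub_eval_of_natDegree_le_three {p : ℝ[X]} (hp : p.natDegree ≤ 3)
    (u v : ℝ) :
    p.eval v - p.eval u = (v - u) * p.derivative.eval u
      + (v - u) ^ 2 * (2 * p.derivative.derivative.eval u + p.derivative.derivative.eval v)
        / 6 := by
  rw [p.as_sum_range' 4 (by omega)]
  simp only [Finset.sum_range_succ, Finset.sum_range_zero, derivative_add, derivative_monomial,
    eval_add, eval_monomial, derivative_zero, eval_zero]
  push_cast
  ring

open Polynomial in
theorem Polynomial.abs_eval_le_max_of_natDegree_le_one {q : ℝ[X]} (hq : q.natDegree ≤ 1)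
    {u v s : ℝ} (hs : s ∈ Icc u v) : |q.eval s| ≤ max |q.eval u| |q.eval v| := by
  rw [eq_X_add_C_of_natDegree_le_one hq]
  simp only [eval_add, eval_mul, eval_C, eval_X]
  rcases le_total 0 (q.coeff 1) with hb | hb
  · exact abs_le_max_abs_abs (by nlinarith [hs.1]) (by nlinarith [hs.2])
  · rw [max_comm]
    exact abs_le_max_abs_abs (by nlinarith [hs.2]) (by nlinarith [hs.1])

open Polynomial Topology Filter in
theorem derivWithin_eqOn_derivative_of_eqOn {f : ℝ → ℝ} {S : Set ℝ} {p : ℝ[X]} {u v : ℝ}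
    (huv : u < v) (hS : Icc u v ⊆ S) (hf : ContinuousOn (derivWithin f S) (Icc u v))
    (h : EqOn f (fun y => p.eval y) (Icc u v)) :
    EqOn (derivWithin f S) (fun y => p.derivative.eval y) (Icc u v) := by
  refine EqOn.of_subset_closure (s := Ioo u v) (fun s hs => ?_) hf
    p.derivative.continuous.continuousOn Ioo_subset_Icc_self (closure_Ioo huv.ne).ge
  have hIoo : Ioo u v ∈ 𝓝 s := isOpen_Ioo.mem_nhds hs
  rw [derivWithin_of_mem_nhds (mem_of_superset hIoo (Ioo_subset_Icc_self.trans hS)),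
    (eventuallyEq_of_mem hIoo (h.mono Ioo_subset_Icc_self)).deriv_eq, p.deriv]

theorem derivWithin_derivWithin_eq_iteratedDerivWithin_two {f : ℝ → ℝ} (S : Set ℝ) :
    derivWithin (derivWithin f S) S = iteratedDerivWithin 2 f S := by
  rw [iteratedDerivWithin_succ, iteratedDerivWithin_one]

theorem abs_le_abs_add_of_abs_derivWithin_le {f : ℝ → ℝ} {a b K s : ℝ}
    (hf : DifferentiableOn ℝ f (Icc a b))
    (hK : ∀ y ∈ Icc a b, |derivWithin f (Icc a b) y| ≤ K)
    (hs : s ∈ Icc a b) : |f s| ≤ |f a| + K * (b - a) := by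
  have hmvt := (convex_Icc a b).norm_image_sub_le_of_norm_derivWithin_le hf hK
    (left_mem_Icc.2 (hs.1.trans hs.2)) hs
  rw [Real.norm_eq_abs, Real.norm_eq_abs, abs_of_nonneg (sub_nonneg.2 hs.1)] at hmvt
  have hK0 : 0 ≤ K := (abs_nonneg _).trans (hK s hs)
  have hsa : K * (s - a) ≤ K * (b - a) := by gcongr; exact hs.2
  linarith [abs_sub_abs_le_abs_sub (f s) (f a)]

theorem exists_lt_mem_Icc_of_mem_Icc {n : ℕ} {t : ℕ → ℝ} {s : ℝ} (hn : 0 < n)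
    (hs : s ∈ Icc (t 0) (t n)) : ∃ i < n, s ∈ Icc (t i) (t (i + 1)) := by
  classical
  have hlast : s ≤ t (n - 1 + 1) := by rw [Nat.sub_add_cancel hn]; exact hs.2
  have hex : ∃ i, s ≤ t (i + 1) := ⟨n - 1, hlast⟩
  refine ⟨Nat.find hex, by have := Nat.find_min' hex hlast; omega, ?_, Nat.find_spec hex⟩
  rcases h : Nat.find hex with _ | i
  · exact hs.1
  · exact (not_le.1 (Nat.find_min hex (h ▸ Nat.lt_succ_self i))).le

theorem abs_le_of_three_moment_eq {n : ℕ} {h d M : ℕ → ℝ} {δ D : ℝ} (hδ : 0 < δ)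
    (hD : 0 ≤ D)
    (hh : ∀ i < n, δ ≤ h i) (hd : ∀ i < n, |d i| ≤ D) (hM0 : M 0 = 0) (hMn : M n = 0)
    (hM : ∀ i, i + 1 < n →
      h i * M i + 2 * (h i + h (i + 1)) * M (i + 1) + h (i + 1) * M (i + 2) = 6 * (d (i + 1) - d i))
    {i : ℕ} (hi : i ≤ n) : |M i| ≤ 6 * D / δ := by
  obtain ⟨j, hj, hmax⟩ := (range (n + 1)).exists_max_image (fun i => |M i|) ⟨0, by simp⟩
  simp only [Finset.mem_range, Nat.lt_succ_iff] at hj hmax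
  refine (hmax i hi).trans ?_
  rcases j with _ | j
  · rw [hM0, abs_zero]; positivity
  rcases hj.eq_or_lt with rfl | hjn
  · rw [hMn, abs_zero]; positivity
  have h₁ := hh j (by omega)
  have h₂ := hh (j + 1) hjn
  have hM₁ := abs_le.1 (hmax j (by omega))
  have hM₂ := abs_le.1 (hmax (j + 2) (by omega))
  have hd₁ := abs_le.1 (hd j (by omega))
  have hd₂ := abs_le.1 (hd (j + 1) hjn)
  have key := hM j hjn
  rw [le_div_iff₀ hδ]
  rcases le_total 0 (M (j + 1)) with hpos | hneg
  · rw [abs_of_nonneg hpos] at hM₁ hM₂ ⊢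
    nlinarith
  · rw [abs_of_nonpos hneg] at hM₁ hM₂ ⊢
    nlinarith

section Knots

variable {n i : ℕ} {t : ℕ → ℝ}

theorem Icc_subset_Icc_of_lt_succ (ht : ∀ i < n, t i < t (i + 1)) (hi : i < n) :
    Icc (t i) (t (i + 1)) ⊆ Icc (t 0) (t n) := by
  have hmono : MonotoneOn t (Set.Iic n) :=
    (strictMonoOn_Iic_of_lt_succ fun m hm => by
      rw [Order.succ_eq_add_one]; exact ht m hm).monotoneOn
  exact Icc_subset_Icc (hmono (by simp) (by simp; omega) (Nat.zero_le i))
    (hmono (by simp; omega) (by simp) hi)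

theorem uniqueDiffOn_Icc_of_lt_succ (ht : ∀ i < n, t i < t (i + 1)) (hn : 0 < n) :
    UniqueDiffOn ℝ (Icc (t 0) (t n)) :=
  uniqueDiffOn_Icc ((ht 0 hn).trans_le
    (Icc_subset_Icc_of_lt_succ ht hn (right_mem_Icc.2 (ht 0 hn).le)).2)

theorem abs_sub_div_sub_le {x : ℕ → ℝ} {A δ : ℝ} (hδ : 0 < δ)
    (hh : ∀ i < n, δ ≤ t (i + 1) - t i)
    (hA : ∀ i ≤ n, |x i| ≤ A) (hi : i < n) :
    |(x (i + 1) - x i) / (t (i + 1) - t i)| ≤ 2 * A / δ := by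
  rw [abs_div, abs_of_pos (hδ.trans_le (hh i hi))]
  exact div_le_div₀ (by linarith [abs_nonneg (x i), hA i hi.le])
    (by linarith [abs_sub (x (i + 1)) (x i), hA i hi.le, hA (i + 1) hi]) hδ (hh i hi)

end Knots

namespace IsNaturalCubicSpline

open Polynomial

variable {n i : ℕ} {t x : ℕ → ℝ} {X : ℝ → ℝ}

theorem exists_polynomial_eqOn (hX : IsNaturalCubicSpline n t x X)
    (ht : ∀ i < n, t i < t (i + 1)) (hi : i < n) :
    ∃ p : ℝ[X], p.natDegree ≤ 3 ∧ EqOn X (fun s => p.eval s) (Icc (t i) (t (i + 1))) ∧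
      EqOn (derivWithin X (Icc (t 0) (t n))) (fun s => p.derivative.eval s)
        (Icc (t i) (t (i + 1))) ∧
      EqOn (iteratedDerivWithin 2 X (Icc (t 0) (t n))) (fun s => p.derivative.derivative.eval s)
        (Icc (t i) (t (i + 1))) := by
  have hS := uniqueDiffOn_Icc_of_lt_succ ht (Nat.zero_lt_of_lt hi)
  have hI := Icc_subset_Icc_of_lt_succ ht hi
  obtain ⟨p, hdeg, hp⟩ := hX.2.1 i hi
  have hp' := derivWithin_eqOn_derivative_of_eqOn (ht i hi) hI
    ((hX.1.continuousOn_derivWithin hS one_le_two).mono hI) hp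
  refine ⟨p, natDegree_le_of_degree_le hdeg, hp, hp', ?_⟩
  rw [← derivWithin_derivWithin_eq_iteratedDerivWithin_two]
  exact derivWithin_eqOn_derivative_of_eqOn (ht i hi) hI
    (((hX.1.derivWithin hS (m := 1) le_rfl).continuousOn_derivWithin hS le_rfl).mono hI) hp'

theorem sub_eq_of_mem_Icc (hX : IsNaturalCubicSpline n t x X)
    (ht : ∀ i < n, t i < t (i + 1)) (hi : i < n) {u v : ℝ} (hu : u ∈ Icc (t i) (t (i + 1)))
    (hv : v ∈ Icc (t i) (t (i + 1))) :
    X v - X u = (v - u) * derivWithin X (Icc (t 0) (t n)) u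
      + (v - u) ^ 2 * (2 * iteratedDerivWithin 2 X (Icc (t 0) (t n)) u
        + iteratedDerivWithin 2 X (Icc (t 0) (t n)) v) / 6 := by
  obtain ⟨p, hdeg, hp, hp', hp''⟩ := hX.exists_polynomial_eqOn ht hi
  rw [hp hu, hp hv, hp' hu, hp'' hu, hp'' hv]
  exact eval_sub_eval_of_natDegree_le_three hdeg u v

theorem three_moment_eq (hX : IsNaturalCubicSpline n t x X)
    (ht : ∀ i < n, t i < t (i + 1)) (hi : i + 1 < n) :
    let h j := t (j + 1) - t j
    let M j := iteratedDerivWithin 2 X (Icc (t 0) (t n)) (t j)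
    let d j := (x (j + 1) - x j) / (t (j + 1) - t j)
    h i * M i + 2 * (h i + h (i + 1)) * M (i + 1) + h (i + 1) * M (i + 2)
      = 6 * (d (i + 1) - d i) := by
  intro h M d
  have hi' : i < n := Nat.lt_of_succ_lt hi
  have hl := hX.sub_eq_of_mem_Icc ht hi (left_mem_Icc.2 (ht (i + 1) hi).le)
    (right_mem_Icc.2 (ht (i + 1) hi).le)
  have hr := hX.sub_eq_of_mem_Icc ht hi' (right_mem_Icc.2 (ht i hi').le)
    (left_mem_Icc.2 (ht i hi').le)
  rw [hX.2.2.1 (i + 1) hi.le, hX.2.2.1 (i + 1 + 1) hi] at hl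
  rw [hX.2.2.1 i hi'.le, hX.2.2.1 (i + 1) hi'] at hr
  have h₀ : h i ≠ 0 := (sub_pos.2 (ht i hi')).ne'
  have h₁ : h (i + 1) ≠ 0 := (sub_pos.2 (ht (i + 1) hi)).ne'
  have hd₀ : d i = derivWithin X (Icc (t 0) (t n)) (t (i + 1))
      - h i * (2 * M (i + 1) + M i) / 6 := by
    rw [div_eq_iff h₀]
    linear_combination -hr
  have hd₁ : d (i + 1) = derivWithin X (Icc (t 0) (t n)) (t (i + 1))
      + h (i + 1) * (2 * M (i + 1) + M (i + 2)) / 6 := by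
    rw [div_eq_iff h₁]
    linear_combination hl
  rw [hd₀, hd₁]
  ring

theorem abs_iteratedDerivWithin_two_knot_le (hX : IsNaturalCubicSpline n t x X)
    (ht : ∀ i < n, t i < t (i + 1)) {A δ : ℝ} (hδ : 0 < δ)
    (hh : ∀ i < n, δ ≤ t (i + 1) - t i)
    (hA : ∀ i ≤ n, |x i| ≤ A) (hi : i ≤ n) :
    |iteratedDerivWithin 2 X (Icc (t 0) (t n)) (t i)| ≤ 12 * A / δ ^ 2 := by
  have hA0 : 0 ≤ A := (abs_nonneg _).trans (hA 0 (Nat.zero_le n))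
  have := abs_le_of_three_moment_eq hδ (by positivity) hh (fun i => abs_sub_div_sub_le hδ hh hA)
    hX.2.2.2.1 hX.2.2.2.2 (fun i hi => hX.three_moment_eq ht hi) hi
  exact this.trans_eq (by ring)

theorem abs_iteratedDerivWithin_two_le (hX : IsNaturalCubicSpline n t x X)
    (ht : ∀ i < n, t i < t (i + 1)) (hn : 0 < n) {K : ℝ}
    (hK : ∀ i ≤ n, |iteratedDerivWithin 2 X (Icc (t 0) (t n)) (t i)| ≤ K)
    {s : ℝ} (hs : s ∈ Icc (t 0) (t n)) :
    |iteratedDerivWithin 2 X (Icc (t 0) (t n)) s| ≤ K := by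
  obtain ⟨i, hi, hsi⟩ := exists_lt_mem_Icc_of_mem_Icc hn hs
  obtain ⟨p, hdeg, -, -, hp''⟩ := hX.exists_polynomial_eqOn ht hi
  have hdeg'' : p.derivative.derivative.natDegree ≤ 1 := by
    have h₁ := natDegree_derivative_le p
    have h₂ := natDegree_derivative_le (derivative p)
    omega
  rw [hp'' hsi]
  refine (abs_eval_le_max_of_natDegree_le_one hdeg'' hsi).trans (max_le ?_ ?_)
  · simpa only [hp'' (left_mem_Icc.2 (ht i hi).le)] using hK i hi.le
  · simpa only [hp'' (right_mem_Icc.2 (ht i hi).le)] using hK (i + 1) hi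

theorem abs_derivWithin_le (hX : IsNaturalCubicSpline n t x X)
    (ht : ∀ i < n, t i < t (i + 1)) (hn : 0 < n) {A δ K : ℝ} (hδ : 0 < δ)
    (hh : ∀ i < n, δ ≤ t (i + 1) - t i) (hA : ∀ i ≤ n, |x i| ≤ A)
    (hK : ∀ s ∈ Icc (t 0) (t n), |iteratedDerivWithin 2 X (Icc (t 0) (t n)) s| ≤ K)
    {s : ℝ} (hs : s ∈ Icc (t 0) (t n)) :
    |derivWithin X (Icc (t 0) (t n)) s| ≤ 2 * A / δ + 7 / 6 * K * (t n - t 0) := by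
  have hS := uniqueDiffOn_Icc_of_lt_succ ht hn
  have h₁ : t 1 ∈ Icc (t 0) (t n) :=
    Icc_subset_Icc_of_lt_succ ht hn (right_mem_Icc.2 (ht 0 hn).le)
  have hX' := abs_le_abs_add_of_abs_derivWithin_le
    ((hX.1.derivWithin hS (m := 1) le_rfl).differentiableOn one_ne_zero)
    (by rwa [derivWithin_derivWithin_eq_iteratedDerivWithin_two]) hs
  have hl := hX.sub_eq_of_mem_Icc ht hn (left_mem_Icc.2 (ht 0 hn).le)
    (right_mem_Icc.2 (ht 0 hn).le)
  rw [hX.2.2.2.1, mul_zero, zero_add, hX.2.2.1 0 hn.le, hX.2.2.1 1 hn] at hl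
  have hh₀ : 0 < t 1 - t 0 := sub_pos.2 (ht 0 hn)
  have hD₀ : derivWithin X (Icc (t 0) (t n)) (t 0) = (x 1 - x 0) / (t 1 - t 0)
      - (t 1 - t 0) * iteratedDerivWithin 2 X (Icc (t 0) (t n)) (t 1) / 6 := by
    rw [eq_sub_iff_add_eq, eq_div_iff hh₀.ne']
    linear_combination -hl
  have hM₁ :
      (t 1 - t 0) * |iteratedDerivWithin 2 X (Icc (t 0) (t n)) (t 1)| ≤ (t n - t 0) * K :=
    mul_le_mul (by linarith [h₁.2]) (hK _ h₁) (abs_nonneg _) (by linarith [h₁.2])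
  have hD₀' : |derivWithin X (Icc (t 0) (t n)) (t 0)| ≤ 2 * A / δ + (t n - t 0) * K / 6 := by
    rw [hD₀]
    refine (abs_sub _ _).trans (add_le_add (abs_sub_div_sub_le hδ hh hA hn) ?_)
    rw [abs_div, abs_mul, abs_of_pos hh₀, abs_of_pos (by norm_num : (0 : ℝ) < 6)]
    exact div_le_div_of_nonneg_right hM₁ (by norm_num)
  linarith

theorem abs_bounds_of_lt_mul_pow_three (hX : IsNaturalCubicSpline n t x X)
    (ht : ∀ i < n, t i < t (i + 1)) (hn : 0 < n) {A δ C : ℝ} (hδ : 0 < δ)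
    (hh : ∀ i < n, δ ≤ t (i + 1) - t i) (hA : ∀ i ≤ n, |x i| ≤ A) (hAδ : A < C * δ ^ 3)
    {s : ℝ} (hs : s ∈ Icc (t 0) (t n)) :
    |X s| ≤ 17 * C * (t n - t 0) ^ 3 ∧
      |derivWithin X (Icc (t 0) (t n)) s| ≤ 16 * C * (t n - t 0) ^ 2 ∧
      |iteratedDerivWithin 2 X (Icc (t 0) (t n)) s| ≤ 12 * C * (t n - t 0) := by
  have h2 (s) (hs : s ∈ Icc (t 0) (t n)) := hX.abs_iteratedDerivWithin_two_le ht hn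
    (fun i hi => hX.abs_iteratedDerivWithin_two_knot_le ht hδ hh hA hi) hs
  have h1 (s) (hs : s ∈ Icc (t 0) (t n)) := hX.abs_derivWithin_le ht hn hδ hh hA h2 hs
  have h0 := abs_le_abs_add_of_abs_derivWithin_le (hX.1.differentiableOn two_ne_zero) h1 hs
  rw [hX.2.2.1 0 (Nat.zero_le n)] at h0
  have hδL : δ ≤ t n - t 0 := (hh 0 hn).trans
    (by linarith [(Icc_subset_Icc_of_lt_succ ht hn (right_mem_Icc.2 (ht 0 hn).le)).2])
  set L := t n - t 0
  have hC : 0 ≤ C := by nlinarith [abs_nonneg (x 0), hA 0 (Nat.zero_le n), pow_pos hδ 3]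
  have hCδ : C * δ * δ ^ 2 ≤ C * δ * L ^ 2 := by gcongr
  have hb₂ : 12 * A / δ ^ 2 ≤ 12 * C * L := by rw [div_le_iff₀ (by positivity)]; nlinarith
  have hb₁ : 2 * A / δ + 7 / 6 * (12 * A / δ ^ 2) * L ≤ 16 * C * L ^ 2 := by
    have : 2 * A / δ ≤ 2 * C * L ^ 2 := by rw [div_le_iff₀ hδ]; nlinarith
    nlinarith [mul_le_mul_of_nonneg_right hb₂ (hδ.le.trans hδL)]
  have hb₀ : A ≤ C * L ^ 3 := hAδ.le.trans (by gcongr)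
  refine ⟨?_, (h1 s hs).trans hb₁, (h2 s hs).trans hb₂⟩
  nlinarith [hA 0 (Nat.zero_le n), mul_le_mul_of_nonneg_right hb₁ (hδ.le.trans hδL)]

end IsNaturalCubicSpline

/-- Uniform `C²` bound for natural cubic splines on `[τ, T]` whose data satisfy
`(max_i |x_i|) (min_i (t_{i+1} - t_i))⁻³ < C`: there is `C₁ > 0` depending only on
`τ`, `T`, `C` bounding `‖X‖_∞ + ‖X'‖_∞ + ‖X''‖_∞`. -/
theorem stmt_8 (τ T C : ℝ) (hτT : τ < T) (hC : 0 < C) :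
    ∃ C₁ : ℝ, 0 < C₁ ∧
      ∀ (n : ℕ) (hn : 1 ≤ n) (t x : ℕ → ℝ),
        t 0 = τ → t n = T → (∀ i < n, t i < t (i + 1)) →
        ((Finset.range (n + 1)).sup' ⟨0, Finset.mem_range.mpr (Nat.succ_pos n)⟩
            (fun i => |x i|))
          * (((Finset.range n).inf' ⟨0, Finset.mem_range.mpr hn⟩
              (fun i => t (i + 1) - t i))⁻¹) ^ 3 < C →
        ∀ X : ℝ → ℝ, IsNaturalCubicSpline n t x X →
          (⨆ s : Set.Icc τ T, |X s|)
          + (⨆ s : Set.Icc τ T, |derivWithin X (Set.Icc τ T) s|)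
          + (⨆ s : Set.Icc τ T, |iteratedDerivWithin 2 X (Set.Icc τ T) s|) < C₁ := by
  refine ⟨17 * C * (T - τ) ^ 3 + 16 * C * (T - τ) ^ 2 + 12 * C * (T - τ) + 1,
    by have := sub_pos.2 hτT; positivity, ?_⟩
  intro n hn t x ht0 htn ht hdata X hX
  subst ht0 htn
  set A := (range (n + 1)).sup' ⟨0, mem_range.mpr (Nat.succ_pos n)⟩ fun i => |x i|
  set δ := (range n).inf' ⟨0, mem_range.mpr hn⟩ fun i => t (i + 1) - t i
  have hA (i) (hi : i ≤ n) : |x i| ≤ A := le_sup' (fun i => |x i|) (by simpa [Nat.lt_succ_iff])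
  have hh (i) (hi : i < n) : δ ≤ t (i + 1) - t i := inf'_le _ (mem_range.2 hi)
  have hδ : 0 < δ := (lt_inf'_iff _).2 fun i hi => sub_pos.2 (ht i (mem_range.1 hi))
  have hAδ : A < C * δ ^ 3 := by
    rwa [inv_pow, ← div_eq_mul_inv, div_lt_iff₀ (by positivity)] at hdata
  have hb (s : Icc (t 0) (t n)) := hX.abs_bounds_of_lt_mul_pow_three ht hn hδ hh hA hAδ s.2
  have : Nonempty (Icc (t 0) (t n)) := ⟨⟨t 0, left_mem_Icc.2 hτT.le⟩⟩
  linarith [ciSup_le fun s => (hb s).1, ciSup_le fun s => (hb s).2.1, ciSup_le fun s => (hb s).2.2]
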